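/- Suppose every service s is (β, ζ)-elastic, meaning Σ_s ≥ β r_s − ζ Σ_{s'≠s} r_{s'}, with all rewards r_s ∈ [R_min, R_max], 0 < R_min ≤ R_max, and β/ζ > (|S|−1) R_max/R_min. Then for any pair of sets A ⊆ S, B ⊆ V and any service s ∈ A, if r_s ≥ (ζ R_{−s} + max_{t ∈ A} Σ_{v ∈ B ∩ ∂t} σ_v)/(α_s β), where R_{−s} = Σ_{s'≠s} r_{s'}, then Σ_{v ∈ B ∩ ∂s} σ_v ≤ α_s Σ_s. -/

import Mathlib

/-!
The threshold on `r s` says `ζ R₋ₛ + max_{t ∈ A} σ(B ∩ ∂t) ≤ α_s β r_s`. Since `α_s ≤ 1` and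
`ζ R₋ₛ ≥ 0`, this gives `σ(B ∩ ∂s) ≤ α_s β r_s - ζ R₋ₛ ≤ α_s (β r_s - ζ R₋ₛ)`, and elasticity bounds
the last bracket by `Σ_s`.
-/

open Finset

lemma le_mul_of_add_le_mul_of_sub_le {α b c x y : ℝ} (hα₀ : 0 ≤ α) (hα₁ : α ≤ 1) (hc : 0 ≤ c)
    (hy : b - c ≤ y) (h : c + x ≤ α * b) : x ≤ α * y :=
  calc x ≤ α * b - c := by linarith
    _ ≤ α * b - α * c := by nlinarith
    _ = α * (b - c) := by ring
    _ ≤ α * y := mul_le_mul_of_nonneg_left hy hα₀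

theorem stmt_1_general {S V : Type*} [Fintype S] [DecidableEq S] [DecidableEq V]
    (σ : V → ℝ)
    (α : S → ℝ) (hα : ∀ s, α s ∈ Set.Ioc (0:ℝ) 1)
    (bd : S → Finset V) (r : S → ℝ)
    (Rmin Rmax : ℝ) (hRmin : 0 < Rmin)
    (hr : ∀ s, r s ∈ Set.Icc Rmin Rmax)
    (β ζ : ℝ) (hβ : 0 < β) (hζ : 0 < ζ)
    (helastic : ∀ s : S, ∑ v ∈ bd s, σ v ≥ β * r s - ζ * ∑ s' ∈ univ.erase s, r s')
    (A : Finset S) (B : Finset V) (s : S) (hs : s ∈ A)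
    (hrs : r s ≥ (ζ * (∑ s' ∈ univ.erase s, r s') +
        A.sup' ⟨s, hs⟩ (fun t => ∑ v ∈ B ∩ bd t, σ v)) / (α s * β)) :
    ∑ v ∈ B ∩ bd s, σ v ≤ α s * ∑ v ∈ bd s, σ v := by
  obtain ⟨hα₀, hα₁⟩ := hα s
  have hrest : 0 ≤ ∑ s' ∈ univ.erase s, r s' :=
    sum_nonneg fun t _ => hRmin.le.trans (hr t).1
  have hthreshold := (div_le_iff₀ (mul_pos hα₀ hβ)).1 hrs
  have hmax : ∑ v ∈ B ∩ bd s, σ v ≤ A.sup' ⟨s, hs⟩ (fun t => ∑ v ∈ B ∩ bd t, σ v) :=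
    le_sup' (fun t => ∑ v ∈ B ∩ bd t, σ v) hs
  refine le_mul_of_add_le_mul_of_sub_le (b := β * r s) hα₀.le hα₁
    (mul_nonneg hζ.le hrest) (helastic s) ?_
  linarith

/-- (β,ζ)-elasticity with sufficiently high rewards implies the α-security
condition for any service s ∈ A. -/
theorem stmt_1 {S V : Type*} [Fintype S] [DecidableEq S] [DecidableEq V]
    (σ : V → ℝ) (hσ : ∀ v, 0 ≤ σ v)
    (α : S → ℝ) (hα : ∀ s, α s ∈ Set.Ioc (0:ℝ) 1)
    (bd : S → Finset V) (r : S → ℝ)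
    (Rmin Rmax : ℝ) (hRmin : 0 < Rmin) (hRR : Rmin ≤ Rmax)
    (hr : ∀ s, r s ∈ Set.Icc Rmin Rmax)
    (β ζ : ℝ) (hβ : 0 < β) (hζ : 0 < ζ)
    (helastic : ∀ s : S, ∑ v ∈ bd s, σ v ≥ β * r s - ζ * ∑ s' ∈ univ.erase s, r s')
    (hratio : β / ζ > ((Fintype.card S : ℝ) - 1) * Rmax / Rmin)
    (A : Finset S) (B : Finset V) (s : S) (hs : s ∈ A)
    (hrs : r s ≥ (ζ * (∑ s' ∈ univ.erase s, r s') +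
        A.sup' ⟨s, hs⟩ (fun t => ∑ v ∈ B ∩ bd t, σ v)) / (α s * β)) :
    ∑ v ∈ B ∩ bd s, σ v ≤ α s * ∑ v ∈ bd s, σ v :=
  stmt_1_general σ α hα bd r Rmin Rmax hRmin hr β ζ hβ hζ helastic A B s hs hrs
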